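/- arXiv:1405.3341 — 3 statements merged into one kernel-verified Lean document; each statement's English description precedes it below -/
import Mathlib

section
/- If a set B of edges of K6 contains, for every pair of vertex-disjoint triangles (S,T), at least one bridge of (S,T), then B contains at least 3 distinct edges. -/
/-- An edge `b` is a bridge of the pair of disjoint triangles `(S,T)` if it has
one endpoint in `S` and the other in `T`. -/
def IsBridge (b S T : Finset (Fin 6)) : Prop :=
  ∃ i ∈ S, ∃ j ∈ T, b = {i, j}

/-! If `B` had at most two edges, one could place each of them entirely inside a triangle `S` or
inside its complement, and then no edge of `B` would be a bridge of `(S, Sᶜ)`. -/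

theorem Finset.exists_subset_pair_of_card_le_two {α : Type*} [DecidableEq α] [Nonempty α]
    {s : Finset α} (hs : s.card ≤ 2) : ∃ a b : α, s ⊆ {a, b} := by
  interval_cases h : s.card
  · obtain rfl := Finset.card_eq_zero.mp h
    obtain ⟨a⟩ := ‹Nonempty α›
    exact ⟨a, a, Finset.empty_subset _⟩
  · obtain ⟨a, rfl⟩ := Finset.card_eq_one.mp h
    exact ⟨a, a, by simp⟩
  · obtain ⟨a, b, -, rfl⟩ := Finset.card_eq_two.mp h
    exact ⟨a, b, subset_rfl⟩

theorem not_isBridge_of_subset_or_subset {b S T : Finset (Fin 6)} (hST : Disjoint S T)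
    (hb : b ⊆ S ∨ b ⊆ T) : ¬ IsBridge b S T := by
  rintro ⟨i, hi, j, hj, rfl⟩
  rcases hb with hb | hb
  · exact Finset.disjoint_left.mp hST (hb (by simp)) hj
  · exact Finset.disjoint_left.mp hST hi (hb (by simp))

theorem exists_eq_pair_or_forall_not_isBridge (e : Finset (Fin 6)) :
    ∃ a b : Fin 6, e = {a, b} ∨ ∀ S T, ¬ IsBridge e S T := by
  by_cases he : ∃ a b : Fin 6, e = {a, b}
  · obtain ⟨a, b, rfl⟩ := he
    exact ⟨a, b, Or.inl rfl⟩
  · exact ⟨0, 0, Or.inr fun S T ⟨i, _, j, _, hij⟩ => he ⟨i, j, hij⟩⟩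

theorem exists_triangle_not_separating_pairs (a b c d : Fin 6) :
    ∃ S : Finset (Fin 6), S.card = 3 ∧
      (({a, b} : Finset (Fin 6)) ⊆ S ∨ {a, b} ⊆ Sᶜ) ∧
      (({c, d} : Finset (Fin 6)) ⊆ S ∨ {c, d} ⊆ Sᶜ) := by
  revert a b c d
  decide

theorem exists_triangle_not_isBridge_compl (e f : Finset (Fin 6)) :
    ∃ S : Finset (Fin 6), S.card = 3 ∧ ¬ IsBridge e S Sᶜ ∧ ¬ IsBridge f S Sᶜ := by
  obtain ⟨a, b, he⟩ := exists_eq_pair_or_forall_not_isBridge e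
  obtain ⟨c, d, hf⟩ := exists_eq_pair_or_forall_not_isBridge f
  obtain ⟨S, hS, hab, hcd⟩ := exists_triangle_not_separating_pairs a b c d
  refine ⟨S, hS, ?_, ?_⟩
  · rcases he with rfl | he
    exacts [not_isBridge_of_subset_or_subset disjoint_compl_right hab, he S Sᶜ]
  · rcases hf with rfl | hf
    exacts [not_isBridge_of_subset_or_subset disjoint_compl_right hcd, hf S Sᶜ]

theorem k6_bridge_system_has_at_least_three_edges_general (B : Finset (Finset (Fin 6)))
    (hbridge : ∀ S T : Finset (Fin 6), S.card = 3 → T.card = 3 → Disjoint S T →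
      ∃ b ∈ B, IsBridge b S T) :
    3 ≤ B.card := by
  by_contra! hB
  obtain ⟨e, f, hBef⟩ := Finset.exists_subset_pair_of_card_le_two (Nat.le_of_lt_succ hB)
  obtain ⟨S, hS, he, hf⟩ := exists_triangle_not_isBridge_compl e f
  have hSc : Sᶜ.card = 3 := by rw [Finset.card_compl, hS, Fintype.card_fin]
  obtain ⟨b, hb, hbS⟩ := hbridge S Sᶜ hS hSc disjoint_compl_right
  have hb' := hBef hb
  simp only [Finset.mem_insert, Finset.mem_singleton] at hb'
  rcases hb' with rfl | rfl
  exacts [he hbS, hf hbS]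

/-- Any set of edges of K6 bridging all pairs of disjoint triangles has at
least 3 elements. -/
theorem k6_bridge_system_has_at_least_three_edges (B : Finset (Finset (Fin 6)))
    (hedge : ∀ b ∈ B, b.card = 2)
    (hbridge : ∀ S T : Finset (Fin 6), S.card = 3 → T.card = 3 → Disjoint S T →
      ∃ b ∈ B, IsBridge b S T) :
    3 ≤ B.card :=
  k6_bridge_system_has_at_least_three_edges_general B hbridge
end

section
/- Let f_1,...,f_p ∈ ℝ^n and w ∈ ℝ^n satisfy ⟨f_i, w⟩ ≥ 0 for all i, with equality holding for exactly two indices j ≠ k, and suppose f_j and f_k are linearly independent. Then there exists w' ∈ ℝ^n with ⟨f_i, w'⟩ > 0 for all i = 1,...,p. -/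
/-!
Take `u` with `⟪f j, u⟫ = ⟪f k, u⟫ = 1`, which exists because `f j, f k` are linearly
independent. Moving from `w` a little in the direction `u` makes the two tight constraints
strictly positive, while the finitely many slack ones stay positive by continuity.
-/

open scoped RealInnerProductSpace InnerProductSpace
open Filter Topology

theorem exists_inner_eq_one_of_linearIndependent {𝕜 E ι : Type*} [RCLike 𝕜]
    [NormedAddCommGroup E] [InnerProductSpace 𝕜 E] [FiniteDimensional 𝕜 E] {v : ι → E}
    (hv : LinearIndependent 𝕜 v) : ∃ u : E, ∀ i, ⟪u, v i⟫_𝕜 = 1 := by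
  have := FiniteDimensional.complete 𝕜 E
  obtain ⟨φ, hφ⟩ := Module.exists_dual_forall_apply_eq_one (hv.linearIndepOn Set.univ)
  refine ⟨(InnerProductSpace.toDual 𝕜 E).symm (LinearMap.toContinuousLinearMap φ), fun i => ?_⟩
  rw [InnerProductSpace.toDual_symm_apply]
  exact hφ i trivial

theorem eventually_pos_add_mul_of_nonneg {a b : ℝ} (ha : 0 ≤ a) (hb : a = 0 → 0 < b) :
    ∀ᶠ t in 𝓝[>] 0, 0 < a + t * b := by
  rcases ha.eq_or_lt with rfl | ha
  · filter_upwards [self_mem_nhdsWithin] with t ht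
    simpa using mul_pos ht (hb rfl)
  · have hcont : Continuous fun t : ℝ => a + t * b := by fun_prop
    exact nhdsWithin_le_nhds <| continuousAt_const.eventually_lt hcont.continuousAt (by simpa)

theorem eventually_inner_add_smul_pos {E ι : Type*} [NormedAddCommGroup E]
    [InnerProductSpace ℝ E] [Finite ι] {f : ι → E} {w u : E} (hw : ∀ i, 0 ≤ ⟪f i, w⟫)
    (hu : ∀ i, ⟪f i, w⟫ = 0 → 0 < ⟪f i, u⟫) :
    ∀ᶠ t in 𝓝[>] (0 : ℝ), ∀ i, 0 < ⟪f i, w + t • u⟫ := by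
  refine eventually_all.2 fun i => ?_
  simp only [inner_add_right, real_inner_smul_right]
  exact eventually_pos_add_mul_of_nonneg (hw i) (hu i)

theorem open_cone_nonempty_of_two_tight_independent_general (n p : ℕ)
    (f : Fin p → EuclideanSpace ℝ (Fin n)) (w : EuclideanSpace ℝ (Fin n))
    (j k : Fin p)
    (hj : ⟪f j, w⟫ = 0) (hk : ⟪f k, w⟫ = 0)
    (hpos : ∀ i, i ≠ j → i ≠ k → 0 < ⟪f i, w⟫)
    (hindep : LinearIndependent ℝ ![f j, f k]) :
    ∃ w' : EuclideanSpace ℝ (Fin n), ∀ i, 0 < ⟪f i, w'⟫ := by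
  obtain ⟨u, hu⟩ := exists_inner_eq_one_of_linearIndependent hindep
  have huj : ⟪f j, u⟫ = 1 := by simpa [real_inner_comm] using hu 0
  have huk : ⟪f k, u⟫ = 1 := by simpa [real_inner_comm] using hu 1
  have hw : ∀ i, 0 ≤ ⟪f i, w⟫ := by
    intro i
    by_cases hij : i = j
    · exact hij ▸ hj.ge
    by_cases hik : i = k
    · exact hik ▸ hk.ge
    exact (hpos i hij hik).le
  have htight : ∀ i, ⟪f i, w⟫ = 0 → 0 < ⟪f i, u⟫ := by
    intro i hi
    by_cases hij : i = j
    · simp [hij, huj]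
    by_cases hik : i = k
    · simp [hik, huk]
    exact absurd hi (hpos i hij hik).ne'
  obtain ⟨t, ht⟩ := (eventually_inner_add_smul_pos hw htight).exists
  exact ⟨w + t • u, ht⟩

/-- Perturbation step: if w lies in the closed cone, on exactly the two
hyperplanes of f j and f k, which are linearly independent, then the open
cone is nonempty. -/
theorem open_cone_nonempty_of_two_tight_independent (n p : ℕ)
    (f : Fin p → EuclideanSpace ℝ (Fin n)) (w : EuclideanSpace ℝ (Fin n))
    (j k : Fin p) (hjk : j ≠ k)
    (hj : ⟪f j, w⟫ = 0) (hk : ⟪f k, w⟫ = 0)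
    (hpos : ∀ i, i ≠ j → i ≠ k → 0 < ⟪f i, w⟫)
    (hindep : LinearIndependent ℝ ![f j, f k]) :
    ∃ w' : EuclideanSpace ℝ (Fin n), ∀ i, 0 < ⟪f i, w'⟫ :=
  open_cone_nonempty_of_two_tight_independent_general n p f w j k hj hk hpos hindep
end

section
/- Let f_1,...,f_p ∈ ℝ^n, let w ∈ ℝ^n, and let I = {i : ⟨f_i, w⟩ = 0} with ⟨f_i, w⟩ > 0 for i ∉ I. If the convex cone generated by {f_i : i ∈ I} is strongly convex (contains no nonzero vector together with its negative) and f_i ≠ 0 for i ∈ I, then the open cone {x ∈ ℝ^n : ⟨f_i, x⟩ > 0 for all i = 1,...,p} is nonempty. -/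
/-!
Strong convexity of the cone spanned by the tight vectors, together with their nonvanishing,
keeps `0` out of their convex hull. A separating hyperplane then gives `v` with `⟪f i, v⟫ > 0`
for every tight `i`, and `w + ε • v` lies in the open cone for all small `ε > 0`: the tight
inner products become `ε ⟪f i, v⟫ > 0`, while the others stay close to `⟪f i, w⟫ > 0`.
-/

open scoped RealInnerProductSpace
open Filter Topology

section ConicalHull

variable {ι E : Type*} [Fintype ι] [AddCommGroup E] [Module ℝ E]

def conicalHull (f : ι → E) (s : Set ι) : Set E :=
  {y | ∃ lam : ι → ℝ, (∀ i, 0 ≤ lam i) ∧ (∀ i ∉ s, lam i = 0) ∧ y = ∑ i, lam i • f i}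

theorem convexHull_image_subset_linearCombination_stdSimplex (f : ι → E) (s : Set ι) :
    convexHull ℝ (f '' s) ⊆
      Fintype.linearCombination ℝ f '' (stdSimplex ℝ ι ∩ {lam | ∀ i ∉ s, lam i = 0}) := by
  classical
  refine convexHull_min ?_ (((convex_stdSimplex ℝ ι).inter ?_).linear_image _)
  · rintro _ ⟨i, hi, rfl⟩
    refine ⟨Pi.single i 1, ⟨single_mem_stdSimplex ℝ i, fun j hj => ?_⟩, by simp⟩
    exact Pi.single_eq_of_ne (by rintro rfl; exact hj hi) _
  · intro x hx y hy a b _ _ _ i hi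
    simp [hx i hi, hy i hi]

theorem zero_notMem_convexHull_image {f : ι → E} {s : Set ι}
    (hsal : ∀ y ∈ conicalHull f s, -y ∈ conicalHull f s → y = 0) (hnz : ∀ i ∈ s, f i ≠ 0) :
    (0 : E) ∉ convexHull ℝ (f '' s) := by
  classical
  intro h0
  obtain ⟨lam, ⟨⟨hlam0, hlam1⟩, hlams⟩, hsum⟩ :=
    convexHull_image_subset_linearCombination_stdSimplex f s h0
  obtain ⟨k, hk⟩ : ∃ k, 0 < lam k := by
    by_contra! h
    linarith [Finset.sum_nonpos fun i (_ : i ∈ Finset.univ) => h i]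
  have hks : k ∈ s := by
    by_contra hks
    exact hk.ne' (hlams k hks)
  have hmem : lam k • f k ∈ conicalHull f s := by
    refine ⟨Pi.single k (lam k), fun i => ?_, fun i hi => ?_, ?_⟩
    · exact Pi.single_nonneg (α := fun _ => ℝ) |>.2 hk.le i
    · exact Pi.single_eq_of_ne (by rintro rfl; exact hi hks) _
    · rw [← Fintype.linearCombination_apply, Fintype.linearCombination_apply_single]
  have hneg : -(lam k • f k) ∈ conicalHull f s := by
    refine ⟨lam - Pi.single k (lam k), fun i => ?_, fun i hi => ?_, ?_⟩
    · by_cases h : i = k <;> simp [h, hlam0]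
    · rcases eq_or_ne i k with rfl | h
      · exact absurd hks hi
      · simp [h, hlams i hi]
    · rw [← Fintype.linearCombination_apply, map_sub, hsum,
        Fintype.linearCombination_apply_single, zero_sub]
  exact hnz k hks ((smul_eq_zero.mp (hsal _ hmem hneg)).resolve_left hk.ne')

end ConicalHull

section InnerProductSpace

variable {E : Type*} [NormedAddCommGroup E] [InnerProductSpace ℝ E]

theorem exists_forall_inner_pos_of_zero_notMem [CompleteSpace E] {K : Set E} (hK : Convex ℝ K)
    (hKc : IsClosed K) (h0 : (0 : E) ∉ K) : ∃ v : E, ∀ x ∈ K, 0 < ⟪x, v⟫ := by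
  obtain ⟨F, u, hF0, hFK⟩ := geometric_hahn_banach_point_closed hK hKc h0
  refine ⟨(InnerProductSpace.toDual ℝ E).symm F, fun x hx => ?_⟩
  rw [real_inner_comm, InnerProductSpace.toDual_symm_apply]
  linarith [hFK x hx, map_zero F]

theorem eventually_pos_add_mul {a b : ℝ} (ha : 0 ≤ a) (hb : a = 0 → 0 < b) :
    ∀ᶠ ε in 𝓝[>] (0 : ℝ), 0 < a + ε * b := by
  rcases ha.eq_or_lt with rfl | ha
  · filter_upwards [self_mem_nhdsWithin] with ε hε
    simpa using mul_pos hε (hb rfl)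
  · have hc : Continuous fun ε : ℝ => a + ε * b := by fun_prop
    exact nhdsWithin_le_nhds ((hc.tendsto' 0 a (by simp)).eventually (lt_mem_nhds ha))

theorem eventually_forall_inner_pos_add_smul {ι : Type*} [Finite ι] (f : ι → E) {w v : E}
    (hw : ∀ i, 0 ≤ ⟪f i, w⟫) (hv : ∀ i, ⟪f i, w⟫ = 0 → 0 < ⟪f i, v⟫) :
    ∀ᶠ ε in 𝓝[>] (0 : ℝ), ∀ i, 0 < ⟪f i, w + ε • v⟫ := by
  refine eventually_all.2 fun i => ?_
  simp only [inner_add_right, real_inner_smul_right]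
  exact eventually_pos_add_mul (hw i) (hv i)

end InnerProductSpace

/-- If w lies in the closed cone, and the convex cone generated by the tight
vectors (those with ⟨f i, w⟩ = 0) is strongly convex with all tight vectors
nonzero, then the open cone is nonempty. -/
theorem open_cone_nonempty_of_tight_cone_strongly_convex (n p : ℕ)
    (f : Fin p → EuclideanSpace ℝ (Fin n)) (w : EuclideanSpace ℝ (Fin n))
    (hpos : ∀ i, ⟪f i, w⟫ ≠ 0 → 0 < ⟪f i, w⟫)
    (hsc : ∀ y : EuclideanSpace ℝ (Fin n),
      (∃ lam : Fin p → ℝ, (∀ i, 0 ≤ lam i) ∧ (∀ i, ⟪f i, w⟫ ≠ 0 → lam i = 0) ∧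
        y = ∑ i, lam i • f i) →
      (∃ mu : Fin p → ℝ, (∀ i, 0 ≤ mu i) ∧ (∀ i, ⟪f i, w⟫ ≠ 0 → mu i = 0) ∧
        -y = ∑ i, mu i • f i) →
      y = 0)
    (hnz : ∀ i, ⟪f i, w⟫ = 0 → f i ≠ 0) :
    ∃ x : EuclideanSpace ℝ (Fin n), ∀ i, 0 < ⟪f i, x⟫ := by
  set tight : Set (Fin p) := {i | ⟪f i, w⟫ = 0}
  have h0 : 0 ∉ convexHull ℝ (f '' tight) := zero_notMem_convexHull_image hsc hnz
  obtain ⟨v, hv⟩ := exists_forall_inner_pos_of_zero_notMem (convex_convexHull ℝ _)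
    ((tight.toFinite.image f).isCompact_convexHull (𝕜 := ℝ)).isClosed h0
  have hw : ∀ i, 0 ≤ ⟪f i, w⟫ := fun i => (eq_or_ne ⟪f i, w⟫ 0).elim (·.ge) fun h => (hpos i h).le
  obtain ⟨ε, hε⟩ := (eventually_forall_inner_pos_add_smul f hw
    fun i hi => hv _ (subset_convexHull ℝ _ ⟨i, hi, rfl⟩)).exists
  exact ⟨w + ε • v, hε⟩
end
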